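/- Let H be an hm-bipartite linear r-uniform hypergraph with head part V₁ and mass part V₂, and let u ∈ V₂. Then the number of edges of the induced subhypergraph H_u = H[N_{V₁}(u) ∪ (V₂ \ {u})] equals ∑_{v ∈ N_{V₁}(u)} d(v) − d(u), where N_{V₁}(u) = N(u) ∩ V₁. -/

import Mathlib

open Finset

variable {V : Type*} [Fintype V] [DecidableEq V]

/-- The degree of a vertex: the number of hyperedges containing it. -/
def hdeg (E : Finset (Finset V)) (v : V) : ℕ :=
  (E.filter (fun e => v ∈ e)).card

open Classical in
/-- The neighborhood of a vertex: vertices at distance exactly one. -/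
noncomputable def nbrs (E : Finset (Finset V)) (v : V) : Finset V :=
  Finset.univ.filter (fun u => u ≠ v ∧ ∃ e ∈ E, v ∈ e ∧ u ∈ e)

/-- `E` is the edge set of an `r`-uniform hypergraph. -/
def Uniform (E : Finset (Finset V)) (r : ℕ) : Prop := ∀ e ∈ E, e.card = r

/-- A hypergraph is linear if any two distinct edges share at most one vertex. -/
def LinearH (E : Finset (Finset V)) : Prop :=
  ∀ e₁ ∈ E, ∀ e₂ ∈ E, e₁ ≠ e₂ → (e₁ ∩ e₂).card ≤ 1

/-- `lam` is an eigenvalue of the adjacency tensor of the `r`-uniform hypergraph `E`: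
there is a nonzero complex vector `x` with `A(H) x^{r-1} = lam x^{[r-1]}`. -/
def IsAdjEigenvalue (E : Finset (Finset V)) (r : ℕ) (lam : ℂ) : Prop :=
  ∃ x : V → ℂ, x ≠ 0 ∧ ∀ v : V,
    ∑ e ∈ E.filter (fun e => v ∈ e), ∏ u ∈ e.erase v, x u = lam * (x v) ^ (r - 1)

/-- The spectral radius of the adjacency tensor: max modulus of eigenvalues. -/
noncomputable def specRad (E : Finset (Finset V)) (r : ℕ) : ℝ :=
  sSup {z : ℝ | ∃ lam : ℂ, IsAdjEigenvalue E r lam ∧ z = ‖lam‖}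

/-- The adjacency matrix of the 2-shadow multigraph of `E`. -/
noncomputable def shadowMatrix (E : Finset (Finset V)) : Matrix V V ℝ :=
  fun u v => if u = v then 0 else ((E.filter (fun e => u ∈ e ∧ v ∈ e)).card : ℝ)

/-- The spectral radius of a real matrix: max modulus of complex eigenvalues. -/
noncomputable def matSpecRad (A : Matrix V V ℝ) : ℝ :=
  sSup {z : ℝ | ∃ (lam : ℂ) (x : V → ℂ), x ≠ 0 ∧
    (A.map (Complex.ofReal)).mulVec x = lam • x ∧ z = ‖lam‖}

/-- The number of 1-walks starting at `u`: pairs `(e, v)` with `u ∈ e`, `v ∈ e`, `v ≠ u`. -/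
def w1 (E : Finset (Finset V)) (u : V) : ℕ :=
  ((E ×ˢ (univ : Finset V)).filter
    (fun p => u ∈ p.1 ∧ p.2 ∈ p.1 ∧ p.2 ≠ u)).card

/-- The number of 2-walks starting at `u`. -/
def w2 (E : Finset (Finset V)) (u : V) : ℕ :=
  (((E ×ˢ (univ : Finset V)) ×ˢ (E ×ˢ (univ : Finset V))).filter
    (fun p => u ∈ p.1.1 ∧ p.1.2 ∈ p.1.1 ∧ p.1.2 ≠ u ∧
      p.1.2 ∈ p.2.1 ∧ p.2.2 ∈ p.2.1 ∧ p.2.2 ≠ p.1.2)).card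

/-- `E` contains a Berge triangle. -/
def HasBergeC3 (E : Finset (Finset V)) : Prop :=
  ∃ e₁ ∈ E, ∃ e₂ ∈ E, ∃ e₃ ∈ E, ∃ v₁ v₂ v₃ : V,
    e₁ ≠ e₂ ∧ e₂ ≠ e₃ ∧ e₁ ≠ e₃ ∧ v₁ ≠ v₂ ∧ v₂ ≠ v₃ ∧ v₁ ≠ v₃ ∧
    v₁ ∈ e₁ ∧ v₂ ∈ e₁ ∧ v₂ ∈ e₂ ∧ v₃ ∈ e₂ ∧ v₃ ∈ e₃ ∧ v₁ ∈ e₃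

/-- `E` contains a Berge-`K_{s,t}`: disjoint vertex sets `S`, `T` of sizes `s`, `t`
and an injective assignment of distinct hyperedges to the pairs. -/
def HasBergeKst (E : Finset (Finset V)) (s t : ℕ) : Prop :=
  ∃ (S T : Finset V) (f : V → V → Finset V),
    S.card = s ∧ T.card = t ∧ Disjoint S T ∧
    (∀ a ∈ S, ∀ b ∈ T, f a b ∈ E ∧ a ∈ f a b ∧ b ∈ f a b) ∧
    (∀ a ∈ S, ∀ b ∈ T, ∀ a' ∈ S, ∀ b' ∈ T, f a b = f a' b' → a = a' ∧ b = b')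

/-- `E` contains a Berge-`K_{s,t}` with the `s`-side inside `V₁` and the `t`-side
inside `V₂`. -/
def HasBergeKstIn (E : Finset (Finset V)) (s t : ℕ) (V₁ V₂ : Finset V) : Prop :=
  ∃ (S T : Finset V) (f : V → V → Finset V),
    S ⊆ V₁ ∧ T ⊆ V₂ ∧ S.card = s ∧ T.card = t ∧ Disjoint S T ∧
    (∀ a ∈ S, ∀ b ∈ T, f a b ∈ E ∧ a ∈ f a b ∧ b ∈ f a b) ∧
    (∀ a ∈ S, ∀ b ∈ T, ∀ a' ∈ S, ∀ b' ∈ T, f a b = f a' b' → a = a' ∧ b = b')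

/-- `E` is hm-bipartite with head part `V₁` and mass part `V₂`: each edge meets
`V₁` in exactly one vertex and `V₂` in the other `r−1` vertices. -/
def HmBipartite (E : Finset (Finset V)) (r : ℕ) (V₁ V₂ : Finset V) : Prop :=
  Disjoint V₁ V₂ ∧ V₁ ∪ V₂ = Finset.univ ∧
  ∀ e ∈ E, (e ∩ V₁).card = 1 ∧ (e ∩ V₂).card = r - 1

/-- The generalized binomial coefficient `C(x, k) = x(x−1)⋯(x−k+1)/k!` for real `x`. -/
noncomputable def genBinom (x : ℝ) (k : ℕ) : ℝ :=
  (descPochhammer ℝ k).eval x / (Nat.factorial k)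

/-!
Count the incidences between `S = N_{V₁}(u)` and the edges. Every edge has a single vertex in
`V₁`, so it meets `S` at most once, and it meets `S` exactly when its head is a neighbour of `u`.
That happens precisely when the edge contains `u` (counted by `d(u)`) or, avoiding `u`, lies
inside `S ∪ (V₂ \ {u})` (an edge of `H_u`); these two cases are disjoint because `u ∉ V₁`.
-/

open Finset

lemma mem_nbrs {E : Finset (Finset V)} {u w : V} :
    w ∈ nbrs E u ↔ w ≠ u ∧ ∃ e ∈ E, u ∈ e ∧ w ∈ e := by
  simp [nbrs]

lemma sum_hdeg_eq_sum_card_inter {α : Type*} [DecidableEq α] (E : Finset (Finset α))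
    (S : Finset α) :
    ∑ v ∈ S, hdeg E v = ∑ e ∈ E, #(S ∩ e) := by
  simp_rw [hdeg, ← filter_mem_eq_inter, card_filter]
  exact sum_comm

lemma card_inter_eq_ite_of_subset {α : Type*} [DecidableEq α] {S A e : Finset α} (hS : S ⊆ A)
    (he : #(e ∩ A) ≤ 1) :
    #(S ∩ e) = if (S ∩ e).Nonempty then 1 else 0 := by
  split_ifs with hne
  · refine le_antisymm (le_trans (card_le_card fun x hx => ?_) he) hne.card_pos
    rw [mem_inter] at hx ⊢
    exact ⟨hx.2, hS hx.1⟩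
  · rwa [card_eq_zero, ← not_nonempty_iff_eq_empty]

namespace HmBipartite

variable {E : Finset (Finset V)} {r : ℕ} {V₁ V₂ : Finset V}

lemma nbrs_inter_inter_nonempty_iff (hbi : HmBipartite E r V₁ V₂) {u : V} (hu : u ∈ V₂)
    {e : Finset V} (he : e ∈ E) :
    (nbrs E u ∩ V₁ ∩ e).Nonempty ↔ u ∈ e ∨ e ⊆ (nbrs E u ∩ V₁) ∪ (V₂ \ {u}) := by
  obtain ⟨hdisj, hcov, hedge⟩ := hbi
  obtain ⟨v, hv⟩ := card_eq_one.mp (hedge e he).1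
  have hv_mem : v ∈ e ∧ v ∈ V₁ := mem_inter.mp (hv ▸ mem_singleton_self v)
  have head_unique : ∀ x ∈ e, x ∈ V₁ → x = v := fun x hx hx₁ =>
    mem_singleton.mp (hv ▸ mem_inter.mpr ⟨hx, hx₁⟩)
  have hvu : v ≠ u := fun h => disjoint_left.mp hdisj hv_mem.2 (h ▸ hu)
  constructor
  · rintro ⟨w, hw⟩
    simp only [mem_inter] at hw
    obtain ⟨⟨hwN, hw₁⟩, hwe⟩ := hw
    refine or_iff_not_imp_left.mpr fun hue x hx => ?_
    rcases mem_union.mp (hcov ▸ mem_univ x : x ∈ V₁ ∪ V₂) with hx₁ | hx₂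
    · rw [head_unique x hx hx₁, ← head_unique w hwe hw₁]
      exact mem_union_left _ (mem_inter.mpr ⟨hwN, hw₁⟩)
    · refine mem_union_right _ (mem_sdiff.mpr ⟨hx₂, ?_⟩)
      exact fun hxu => hue (mem_singleton.mp hxu ▸ hx)
  · rintro (hue | hsub)
    · exact ⟨v, mem_inter.mpr ⟨mem_inter.mpr ⟨mem_nbrs.mpr ⟨hvu, e, he, hue, hv_mem.1⟩,
        hv_mem.2⟩, hv_mem.1⟩⟩
    · refine ⟨v, mem_inter.mpr ⟨?_, hv_mem.1⟩⟩
      rcases mem_union.mp (hsub hv_mem.1) with hS | hV₂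
      · exact hS
      · exact absurd (mem_sdiff.mp hV₂).1 (disjoint_left.mp hdisj hv_mem.2)

end HmBipartite

theorem stmt19_general {V : Type*} [Fintype V] [DecidableEq V]
    (E : Finset (Finset V)) (r : ℕ) (V₁ V₂ : Finset V)
    (hbi : HmBipartite E r V₁ V₂)
    (u : V) (hu : u ∈ V₂) :
    (E.filter (fun e => e ⊆ (nbrs E u ∩ V₁) ∪ (V₂ \ {u}))).card + hdeg E u =
      ∑ v ∈ nbrs E u ∩ V₁, hdeg E v := by
  set S := nbrs E u ∩ V₁
  set T := S ∪ (V₂ \ {u})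
  have huT : u ∉ T := by
    simp only [T, S, mem_union, mem_inter, mem_sdiff, mem_singleton, not_true_eq_false,
      and_false, or_false]
    exact fun h => disjoint_left.mp hbi.1 h.2 hu
  have hdisj : Disjoint (E.filter (u ∈ ·)) (E.filter (· ⊆ T)) :=
    disjoint_filter.mpr fun e _ hue hsub => huT (hsub hue)
  calc #(E.filter (· ⊆ T)) + hdeg E u
      = #(E.filter fun e => u ∈ e ∨ e ⊆ T) := by
        rw [filter_or, card_union_of_disjoint hdisj, add_comm, hdeg]
    _ = #(E.filter fun e => (S ∩ e).Nonempty) :=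
        congrArg card <| filter_congr fun e he =>
          (hbi.nbrs_inter_inter_nonempty_iff hu he).symm
    _ = ∑ e ∈ E, #(S ∩ e) := by
        rw [card_filter]
        exact sum_congr rfl fun e he =>
          (card_inter_eq_ite_of_subset inter_subset_right (hbi.2.2 e he).1.le).symm
    _ = ∑ v ∈ S, hdeg E v := (sum_hdeg_eq_sum_card_inter E S).symm

/-- edge count of the induced subhypergraph `H_u`. -/
theorem stmt19 {V : Type*} [Fintype V] [DecidableEq V]
    (E : Finset (Finset V)) (r : ℕ) (V₁ V₂ : Finset V)
    (hU : Uniform E r) (hL : LinearH E) (hbi : HmBipartite E r V₁ V₂)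
    (u : V) (hu : u ∈ V₂) :
    (E.filter (fun e => e ⊆ (nbrs E u ∩ V₁) ∪ (V₂ \ {u}))).card + hdeg E u =
      ∑ v ∈ nbrs E u ∩ V₁, hdeg E v :=
  stmt19_general E r V₁ V₂ hbi u hu
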